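/- Let E ∈ ℝ, ρ > 0, and ξ ∈ ℝ³ with |ξ| ≤ 2√(E+ρ²) (assuming E + ρ² > 0). Then there exist k, l ∈ ℂ³ with k² = l² = E (as complex quadratic form k₁²+k₂²+k₃²), Im k = Im l, |Im k| = |Im l| = ρ, and k - l = ξ. -/

import Mathlib

/-!
Write `k = x + i z` and `l = y + i z` with `x, y, z` real, so that `k² = ‖x‖² - ‖z‖² + 2i⟪x, z⟫`.
Take an orthonormal pair `u₀, u₁` orthogonal to `ξ` and put `x = ξ/2 + t u₀`, `y = -ξ/2 + t u₀`,
`z = ρ u₁`: then `x - y = ξ`, both `x` and `y` are orthogonal to `z`, and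
`‖x‖² - ‖z‖² = ‖y‖² - ‖z‖² = ‖ξ‖²/4 + t² - ρ²`, which equals `E` for `t = √(E + ρ² - ‖ξ‖²/4)`.
This square root is real exactly when `‖ξ‖ ≤ 2√(E + ρ²)`.
-/

open Real

open scoped RealInnerProductSpace

section

variable {V : Type*} [NormedAddCommGroup V] [InnerProductSpace ℝ V]

theorem exists_orthonormal_pair_orthogonal_to (hV : 3 ≤ Module.finrank ℝ V) (ξ : V) :
    ∃ u : Fin 2 → V, Orthonormal ℝ u ∧ ∀ i, ⟪ξ, u i⟫ = 0 := by
  have : FiniteDimensional ℝ V := Module.finite_of_finrank_pos (by omega)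
  have hK : 2 ≤ Module.finrank ℝ (ℝ ∙ ξ)ᗮ := by
    have := (ℝ ∙ ξ).finrank_add_finrank_orthogonal
    have := finrank_span_le_card (R := ℝ) ({ξ} : Set V)
    simp only [Set.toFinset_singleton, Finset.card_singleton] at this
    omega
  let b := stdOrthonormalBasis ℝ (ℝ ∙ ξ)ᗮ
  refine ⟨fun i => b (Fin.castLE hK i), ?_, fun i => ?_⟩
  · exact (b.orthonormal.comp _ (Fin.castLE_injective hK)).comp_linearIsometry (ℝ ∙ ξ)ᗮ.subtypeₗᵢ
  · exact Submodule.mem_orthogonal_singleton_iff_inner_right.mp (b _).2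

theorem exists_pair_on_quadric_with_sub_eq (hV : 3 ≤ Module.finrank ℝ V) {E ρ : ℝ} (hρ : 0 ≤ ρ)
    (ξ : V) (hξ : ‖ξ‖ ^ 2 ≤ 4 * (E + ρ ^ 2)) :
    ∃ x y z : V, x - y = ξ ∧ ‖x‖ ^ 2 - ‖z‖ ^ 2 = E ∧ ‖y‖ ^ 2 - ‖z‖ ^ 2 = E ∧
      ⟪x, z⟫ = 0 ∧ ⟪y, z⟫ = 0 ∧ ‖z‖ = ρ := by
  obtain ⟨u, hu, hξu⟩ := exists_orthonormal_pair_orthogonal_to hV ξ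
  set t := √(E + ρ ^ 2 - ‖ξ‖ ^ 2 / 4)
  have ht : t ^ 2 = E + ρ ^ 2 - ‖ξ‖ ^ 2 / 4 := Real.sq_sqrt (by linarith)
  have hz : ‖ρ • u 1‖ = ρ := by rw [norm_smul, hu.1 1, mul_one, Real.norm_of_nonneg hρ]
  have hnorm {s : ℝ} (hs : s ^ 2 = 1 / 4) : ‖s • ξ + t • u 0‖ ^ 2 - ‖ρ • u 1‖ ^ 2 = E := by
    rw [norm_add_sq_real, inner_smul_left, inner_smul_right, hξu 0, norm_smul, norm_smul, hu.1 0, hz,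
      Real.norm_eq_abs, Real.norm_eq_abs, mul_pow, sq_abs, mul_one, sq_abs]
    linear_combination ‖ξ‖ ^ 2 * hs + ht
  have horth (s : ℝ) : ⟪s • ξ + t • u 0, ρ • u 1⟫ = 0 := by
    simp [inner_add_left, inner_smul_left, inner_smul_right, hξu 1, hu.2 (by decide : (0 : Fin 2) ≠ 1)]
  exact ⟨(1 / 2 : ℝ) • ξ + t • u 0, (-1 / 2 : ℝ) • ξ + t • u 0, ρ • u 1, by module,
    hnorm (by norm_num), hnorm (by norm_num), horth _, horth _, hz⟩

end

theorem sum_complex_mk_sq {ι : Type*} [Fintype ι] (x y : EuclideanSpace ℝ ι) :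
    ∑ i, (⟨x i, y i⟩ : ℂ) ^ 2 = ⟨‖x‖ ^ 2 - ‖y‖ ^ 2, 2 * ⟪x, y⟫⟩ := by
  rw [EuclideanSpace.norm_sq_eq, EuclideanSpace.norm_sq_eq]
  apply Complex.ext <;>
    simp [sq, two_mul, Finset.sum_sub_distrib, Finset.mul_sum, PiLp.inner_apply, mul_comm]

theorem stmt10 (E ρ : ℝ) (hρ : 0 < ρ) (hE : 0 < E + ρ ^ 2)
    (ξ : EuclideanSpace ℝ (Fin 3)) (hξ : ‖ξ‖ ≤ 2 * Real.sqrt (E + ρ ^ 2)) :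
    ∃ k l : Fin 3 → ℂ,
      (∑ i, (k i) ^ 2) = (E : ℂ) ∧
      (∑ i, (l i) ^ 2) = (E : ℂ) ∧
      (∀ i, (k i).im = (l i).im) ∧
      Real.sqrt (∑ i, (k i).im ^ 2) = ρ ∧
      Real.sqrt (∑ i, (l i).im ^ 2) = ρ ∧
      (∀ i, k i - l i = (ξ i : ℂ)) := by
  have hξ' : ‖ξ‖ ^ 2 ≤ 4 * (E + ρ ^ 2) :=
    calc ‖ξ‖ ^ 2 ≤ (2 * √(E + ρ ^ 2)) ^ 2 := pow_le_pow_left₀ (norm_nonneg ξ) hξ 2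
      _ = 4 * (E + ρ ^ 2) := by rw [mul_pow, Real.sq_sqrt hE.le]; norm_num
  obtain ⟨x, y, z, hxy, hx, hy, hxz, hyz, hz⟩ :=
    exists_pair_on_quadric_with_sub_eq (by simp) hρ.le ξ hξ'
  have him : √(∑ i, z i ^ 2) = ρ := by
    simp only [← hz, EuclideanSpace.norm_eq, Real.norm_eq_abs, sq_abs]
  refine ⟨fun i => ⟨x i, z i⟩, fun i => ⟨y i, z i⟩, ?_, ?_, fun _ => rfl, him, him, fun i => ?_⟩
  · rw [sum_complex_mk_sq, hx, hxz, mul_zero]; rfl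
  · rw [sum_complex_mk_sq, hy, hyz, mul_zero]; rfl
  · apply Complex.ext <;> simp [← hxy]
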